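/- Let y : [0,T] → ℝ≥0 be continuous with y(0) = 0, and suppose there are constants K₁, A > 0 and a nonnegative quantity J(t) := ∫₀ᵗ I(s) ds (I ≥ 0 continuous) such that for all t ∈ [0,T]: sup_{0≤τ≤t} y(τ) + 2 J(t) ≤ K₁ ∫₀ᵗ y(s) I(s) ds + A. If 2 K₁ A ≤ 1, then sup_{0≤t≤T} y(t) + J(T) ≤ A. -/
import Mathlib


open MeasureTheory intervalIntegral Set Topology Filter

/-- Abstract bootstrap/continuity argument for the small-data `L³` estimate:
if `y(0) = 0` and `sup_{τ≤t} y(τ) + 2∫₀ᵗ I ≤ K₁ ∫₀ᵗ y I + A` on `[0,T]`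
with `2K₁A ≤ 1`, then `sup y + ∫₀ᵀ I ≤ A`. -/
theorem bootstrap_L3
    (T K₁ A : ℝ) (hT : 0 ≤ T) (hK₁ : 0 < K₁) (hA : 0 < A)
    (y I : ℝ → ℝ)
    (hy_cont : ContinuousOn y (Icc 0 T)) (hy_nonneg : ∀ t ∈ Icc (0:ℝ) T, 0 ≤ y t)
    (hy0 : y 0 = 0)
    (hI_cont : ContinuousOn I (Icc 0 T)) (hI_nonneg : ∀ t ∈ Icc (0:ℝ) T, 0 ≤ I t)
    (hineq : ∀ t ∈ Icc (0:ℝ) T, ∀ τ ∈ Icc (0:ℝ) t,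
      y τ + 2 * ∫ s in (0:ℝ)..t, I s ≤ (K₁ * ∫ s in (0:ℝ)..t, y s * I s) + A)
    (hsmall : 2 * K₁ * A ≤ 1) :
    ∀ t ∈ Icc (0:ℝ) T, y t + ∫ s in (0:ℝ)..T, I s ≤ A := by
  -- Improvement lemma: if `y ≤ 2A` on `[0,t]`, then `y τ + ∫₀ᵗ I ≤ A` on `[0,t]`.
  have improve : ∀ t ∈ Icc (0:ℝ) T, (∀ s ∈ Icc (0:ℝ) t, y s ≤ 2 * A) →
      ∀ τ ∈ Icc (0:ℝ) t, y τ + (∫ s in (0:ℝ)..t, I s) ≤ A := by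
    intro t ht hbound τ hτ
    have ht0 : (0:ℝ) ≤ t := ht.1
    have hsub : Icc (0:ℝ) t ⊆ Icc 0 T := Icc_subset_Icc le_rfl ht.2
    have hJnn : 0 ≤ ∫ s in (0:ℝ)..t, I s :=
      intervalIntegral.integral_nonneg ht0 (fun s hs => hI_nonneg s (hsub hs))
    have hIint : IntervalIntegrable I volume 0 t := by
      apply ContinuousOn.intervalIntegrable
      rw [uIcc_of_le ht0]; exact hI_cont.mono hsub
    have hyIint : IntervalIntegrable (fun s => y s * I s) volume 0 t := by
      apply ContinuousOn.intervalIntegrable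
      rw [uIcc_of_le ht0]
      exact ((hy_cont.mono hsub).mul (hI_cont.mono hsub))
    have h2int : IntervalIntegrable (fun s => 2 * A * I s) volume 0 t :=
      (hIint.const_mul (2 * A))
    have hmono : (∫ s in (0:ℝ)..t, y s * I s) ≤ ∫ s in (0:ℝ)..t, 2 * A * I s := by
      apply intervalIntegral.integral_mono_on ht0 hyIint h2int
      intro s hs
      exact mul_le_mul_of_nonneg_right (hbound s hs) (hI_nonneg s (hsub hs))
    have hconst : (∫ s in (0:ℝ)..t, 2 * A * I s) = 2 * A * ∫ s in (0:ℝ)..t, I s :=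
      intervalIntegral.integral_const_mul _ _
    have hkey := hineq t ht τ hτ
    set Jt := ∫ s in (0:ℝ)..t, I s with hJt
    have h1 : K₁ * (∫ s in (0:ℝ)..t, y s * I s) ≤ K₁ * (2 * A * Jt) := by
      apply mul_le_mul_of_nonneg_left _ hK₁.le
      rw [← hconst]; exact hmono
    nlinarith [mul_le_mul_of_nonneg_right hsmall hJnn]
  -- Claim: `y ≤ 2A` on all of `[0,T]`.
  have hclaim : ∀ s ∈ Icc (0:ℝ) T, y s ≤ 2 * A := by
    by_contra hcon
    push_neg at hcon
    set B : Set ℝ := Icc 0 T ∩ {s | 2 * A ≤ y s} with hB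
    have hBne : B.Nonempty := by
      obtain ⟨s, hs, hs2⟩ := hcon
      exact ⟨s, hs, le_of_lt hs2⟩
    have hBclosed : IsClosed B :=
      hy_cont.preimage_isClosed_of_isClosed isClosed_Icc isClosed_Ici
    have hBbdd : BddBelow B := ⟨0, fun x hx => hx.1.1⟩
    set t₀ := sInf B with ht₀
    have ht₀B : t₀ ∈ B := hBclosed.csInf_mem hBne hBbdd
    have ht₀Icc : t₀ ∈ Icc (0:ℝ) T := ht₀B.1
    have ht₀pos : 0 < t₀ := by
      rcases lt_or_eq_of_le ht₀Icc.1 with h | h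
      · exact h
      · exfalso
        have : 2 * A ≤ y t₀ := ht₀B.2
        rw [← h, hy0] at this
        linarith
    have hlt : ∀ s ∈ Ico (0:ℝ) t₀, y s ≤ 2 * A := by
      intro s hs
      by_contra hcon2
      push_neg at hcon2
      have : s ∈ B := ⟨⟨hs.1, le_trans hs.2.le ht₀Icc.2⟩, hcon2.le⟩
      exact absurd (csInf_le hBbdd this) (not_le_of_gt hs.2)
    -- By continuity, `y t₀ ≤ 2A` as well.
    have ht₀le : y t₀ ≤ 2 * A := by
      have hmem : t₀ ∈ closure (Ico (0:ℝ) t₀) := by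
        rw [closure_Ico (ne_of_lt ht₀pos)]
        exact ⟨ht₀pos.le, le_rfl⟩
      have hne : (𝓝[Ico (0:ℝ) t₀] t₀).NeBot := mem_closure_iff_nhdsWithin_neBot.mp hmem
      have htend : Filter.Tendsto y (𝓝[Ico (0:ℝ) t₀] t₀) (𝓝 (y t₀)) := by
        have h1 : ContinuousWithinAt y (Icc (0:ℝ) t₀) t₀ :=
          (hy_cont t₀ ht₀Icc).mono (Icc_subset_Icc le_rfl ht₀Icc.2)
        exact h1.tendsto.mono_left (nhdsWithin_mono _ Ico_subset_Icc_self)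
      exact le_of_tendsto htend (Filter.eventually_of_mem self_mem_nhdsWithin hlt)
    have hall : ∀ s ∈ Icc (0:ℝ) t₀, y s ≤ 2 * A := by
      intro s hs
      rcases lt_or_eq_of_le hs.2 with h | h
      · exact hlt s ⟨hs.1, h⟩
      · rw [h]; exact ht₀le
    have := improve t₀ ht₀Icc hall t₀ ⟨ht₀pos.le, le_rfl⟩
    have hJnn : 0 ≤ ∫ s in (0:ℝ)..t₀, I s :=
      intervalIntegral.integral_nonneg ht₀pos.le
        (fun s hs => hI_nonneg s ⟨hs.1, le_trans hs.2 ht₀Icc.2⟩)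
    have : y t₀ ≤ A := by linarith
    have h2 : 2 * A ≤ y t₀ := ht₀B.2
    linarith
  intro t ht
  exact improve T ⟨hT, le_rfl⟩ hclaim t ht
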